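/- arXiv:math/0402333 — 2 statements merged into one kernel-verified Lean document; each statement's English description precedes it below -/
import Mathlib

section
/- If A : T → SL(2,R) is continuous and homotopic to the identity (T = R/Z), α ∈ T, and B : T → SL(2,R) is continuous of degree r (i.e. homotopic to θ ↦ E_r(θ), the rotation matrix by angle 2πrθ), then the fibered rotation number of the conjugated cocycle (α, B(·+α)A(·)B(·)^{-1}) equals the fibered rotation number of (α, A) plus rα, modulo 1. -/
open Real Filter

noncomputable section

/-- `f` is a (continuous) angle lift of the projective action of the 1-periodic map
`A : ℝ → SL(2,ℝ)` on the circle fiber: the direction of A(θ)·(cos 2πx, sin 2πx) is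
the angle x + f(θ,x) (in turns), and f is 1-periodic in x. -/
def IsAngleLift (A : ℝ → Matrix (Fin 2) (Fin 2) ℝ) (f : ℝ → ℝ → ℝ) : Prop :=
  Continuous (fun p : ℝ × ℝ => f p.1 p.2) ∧
  (∀ θ x, f θ (x + 1) = f θ x) ∧
  ∀ θ x, ∃ c : ℝ, 0 < c ∧
    (A θ).mulVec ![Real.cos (2 * π * x), Real.sin (2 * π * x)] =
      c • ![Real.cos (2 * π * (x + f θ x)), Real.sin (2 * π * (x + f θ x))]

/-- The lifted skew product F̃(θ,x) = (θ+α, x+f(θ,x)). -/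
def liftMap (α : ℝ) (f : ℝ → ℝ → ℝ) : ℝ × ℝ → ℝ × ℝ :=
  fun p => (p.1 + α, p.2 + f p.1 p.2)

/-- ρ is the fibered rotation number determined by the angle lift f: the Birkhoff
averages (1/n)Σ_{k<n} f(F̃^k(θ,x)) converge to ρ for every (θ,x). -/
def HasFiberedRotNum (α : ℝ) (f : ℝ → ℝ → ℝ) (ρ : ℝ) : Prop :=
  ∀ θ x : ℝ,
    Tendsto (fun n : ℕ =>
        (∑ k ∈ Finset.range n,
          f ((liftMap α f)^[k] (θ, x)).1 ((liftMap α f)^[k] (θ, x)).2) / n)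
      atTop (nhds ρ)

/-!
Let `Φ = fiberLift g`, `Φ(θ, x) = (θ, x + g(θ, x))`, be the lift of the fibre action of `B`.
Since `B(θ + α) A(θ) = C(θ) B(θ)` for the conjugated cocycle `C`, the lifted skew products satisfy
`F̃_C ∘ Φ = Φ ∘ F̃_A + (0, m)` with an integer `m` that is constant by continuity. Iterating,
the fibre displacements of corresponding orbits differ by `g(nα, ·) + n m`; as `g(θ, x) - rθ` is
bounded by periodicity, dividing by `n` gives `ρC - ρA = rα + m`.
-/

open Real Filter Matrix Function

def angleVec (x : ℝ) : Fin 2 → ℝ := ![cos (2 * π * x), sin (2 * π * x)]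

def MapsAngle (M : Matrix (Fin 2) (Fin 2) ℝ) (x y : ℝ) : Prop :=
  ∃ c : ℝ, 0 < c ∧ M *ᵥ angleVec x = c • angleVec y

lemma IsAngleLift.mapsAngle {A : ℝ → Matrix (Fin 2) (Fin 2) ℝ} {f : ℝ → ℝ → ℝ}
    (hf : IsAngleLift A f) (θ x : ℝ) : MapsAngle (A θ) x (x + f θ x) :=
  hf.2.2 θ x

lemma MapsAngle.mul {M N : Matrix (Fin 2) (Fin 2) ℝ} {x y z : ℝ}
    (hM : MapsAngle M x y) (hN : MapsAngle N y z) : MapsAngle (N * M) x z := by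
  obtain ⟨c, hc, hMx⟩ := hM
  obtain ⟨d, hd, hNy⟩ := hN
  exact ⟨c * d, mul_pos hc hd, by rw [← mulVec_mulVec, hMx, mulVec_smul, hNy, smul_smul]⟩

lemma exists_int_eq_add_of_smul_angleVec_eq {a b c d : ℝ} (hc : 0 < c) (hd : 0 < d)
    (h : c • angleVec a = d • angleVec b) : ∃ m : ℤ, a = b + m := by
  have h0 : c * cos (2 * π * a) = d * cos (2 * π * b) := by
    simpa [angleVec] using congrFun h 0
  have h1 : c * sin (2 * π * a) = d * sin (2 * π * b) := by
    simpa [angleVec] using congrFun h 1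
  have hcd : c = d := by
    -- the two sides have Euclidean lengths `c` and `d`
    have hsq : c ^ 2 = d ^ 2 := by
      linear_combination (sin_sq_add_cos_sq (2 * π * b)) * d ^ 2
        - (sin_sq_add_cos_sq (2 * π * a)) * c ^ 2
        + (c * sin (2 * π * a) + d * sin (2 * π * b)) * h1
        + (c * cos (2 * π * a) + d * cos (2 * π * b)) * h0
    nlinarith
  subst hcd
  have hcos : cos (2 * π * a - 2 * π * b) = 1 := by
    have := sin_sq_add_cos_sq (2 * π * b)
    rw [cos_sub, mul_left_cancel₀ hc.ne' h0, mul_left_cancel₀ hc.ne' h1]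
    linarith
  obtain ⟨m, hm⟩ := (cos_eq_one_iff _).1 hcos
  refine ⟨m, ?_⟩
  have hπ : 2 * π ≠ 0 := by positivity
  apply mul_left_cancel₀ hπ
  linear_combination -hm

lemma MapsAngle.exists_int_eq_add {M : Matrix (Fin 2) (Fin 2) ℝ} {x y z : ℝ}
    (hy : MapsAngle M x y) (hz : MapsAngle M x z) : ∃ m : ℤ, z = y + m := by
  obtain ⟨c, hc, hMy⟩ := hy
  obtain ⟨d, hd, hMz⟩ := hz
  exact exists_int_eq_add_of_smul_angleVec_eq hd hc (hMz.symm.trans hMy)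

lemma exists_int_forall_eq_of_continuous {X : Type*} [TopologicalSpace X] [PreconnectedSpace X]
    [Nonempty X] {d : X → ℝ} (hd : Continuous d) (hint : ∀ p, ∃ m : ℤ, d p = m) :
    ∃ m : ℤ, ∀ p, d p = m := by
  obtain ⟨p₀⟩ := ‹Nonempty X›
  obtain ⟨m, hm⟩ := hint p₀
  refine ⟨m, fun p => hm ▸ ?_⟩
  exact isPreconnected_univ.constant_of_mapsTo
    Real.isClosedEmbedding_intCast.isInducing.isDiscrete_range hd.continuousOn
    (fun q _ => (hint q).imp fun _ h => h.symm) (Set.mem_univ p) (Set.mem_univ p₀)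

def fiberLift (g : ℝ → ℝ → ℝ) (p : ℝ × ℝ) : ℝ × ℝ := (p.1, p.2 + g p.1 p.2)

theorem IsAngleLift.exists_int_liftMap_fiberLift {A B C : ℝ → Matrix (Fin 2) (Fin 2) ℝ}
    {f g h : ℝ → ℝ → ℝ} {α : ℝ} (hf : IsAngleLift A f) (hg : IsAngleLift B g)
    (hh : IsAngleLift C h) (hconj : ∀ θ, C θ * B θ = B (θ + α) * A θ) :
    ∃ m : ℤ, ∀ p, liftMap α h (fiberLift g p) = fiberLift g (liftMap α f p) + (0, (m : ℝ)) := by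
  set d : ℝ × ℝ → ℝ := fun p =>
    (liftMap α h (fiberLift g p)).2 - (fiberLift g (liftMap α f p)).2
  have hint : ∀ p, ∃ m : ℤ, d p = m := by
    rintro ⟨θ, x⟩
    have hCB := (hg.mapsAngle θ x).mul (hh.mapsAngle θ _)
    rw [hconj] at hCB
    obtain ⟨m, hm⟩ := ((hf.mapsAngle θ x).mul (hg.mapsAngle (θ + α) _)).exists_int_eq_add hCB
    exact ⟨m, by simp only [d, liftMap, fiberLift]; linarith⟩
  have hd : Continuous d := by
    have hfc := hf.1
    have hgc := hg.1
    have hhc := hh.1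
    simp only [d, liftMap, fiberLift]
    fun_prop
  obtain ⟨m, hm⟩ := exists_int_forall_eq_of_continuous hd hint
  refine ⟨m, fun p => Prod.ext (by simp [liftMap, fiberLift]) ?_⟩
  have := hm p
  simp only [d] at this
  simp only [Prod.snd_add]
  linarith

section liftMap

variable {α : ℝ} {f : ℝ → ℝ → ℝ}

lemma liftMap_iterate_fst (n : ℕ) (p : ℝ × ℝ) : ((liftMap α f)^[n] p).1 = p.1 + n * α := by
  induction n with
  | zero => simp
  | succ n ih =>
    rw [iterate_succ_apply', liftMap, ih]
    push_cast
    ring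

lemma sum_range_liftMap_iterate (n : ℕ) (p : ℝ × ℝ) :
    ∑ k ∈ Finset.range n, f ((liftMap α f)^[k] p).1 ((liftMap α f)^[k] p).2 =
      ((liftMap α f)^[n] p).2 - p.2 := by
  induction n with
  | zero => simp
  | succ n ih =>
    rw [Finset.sum_range_succ, ih, iterate_succ_apply' (liftMap α f)]
    simp only [liftMap]
    ring

lemma HasFiberedRotNum.tendsto_iterate_snd_div {ρ : ℝ} (h : HasFiberedRotNum α f ρ)
    (p : ℝ × ℝ) :
    Tendsto (fun n : ℕ => ((liftMap α f)^[n] p).2 / n) atTop (nhds ρ) := by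
  have hlim := (h p.1 p.2).add (tendsto_const_div_atTop_nhds_zero_nat p.2)
  rw [add_zero] at hlim
  refine hlim.congr fun n => ?_
  rw [← add_div, sum_range_liftMap_iterate]
  ring

lemma liftMap_add_int (hper : ∀ θ x, f θ (x + 1) = f θ x) (p : ℝ × ℝ) (m : ℤ) :
    liftMap α f (p + (0, (m : ℝ))) = liftMap α f p + (0, (m : ℝ)) := by
  have hfm : f p.1 (p.2 + m) = f p.1 p.2 := by
    simpa using Periodic.int_mul (hper p.1) m p.2
  ext
  · simp only [liftMap, Prod.fst_add, add_zero]
  · simp only [liftMap, Prod.fst_add, Prod.snd_add, add_zero, hfm]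
    ring

lemma liftMap_iterate_fiberLift {g h : ℝ → ℝ → ℝ} {m : ℤ} (hper : ∀ θ x, h θ (x + 1) = h θ x)
    (hm : ∀ p, liftMap α h (fiberLift g p) = fiberLift g (liftMap α f p) + (0, (m : ℝ)))
    (n : ℕ) (p : ℝ × ℝ) :
    (liftMap α h)^[n] (fiberLift g p) =
      fiberLift g ((liftMap α f)^[n] p) + (0, ((n * m : ℤ) : ℝ)) := by
  induction n with
  | zero => simp
  | succ n ih =>
    rw [iterate_succ_apply', ih, liftMap_add_int hper, hm, ← iterate_succ_apply' (liftMap α f)]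
    ext <;> simp only [Prod.fst_add, Prod.snd_add, add_zero]
    push_cast
    ring

end liftMap

lemma exists_abs_le_of_continuous_of_periodic {h : ℝ → ℝ → ℝ}
    (hc : Continuous fun p : ℝ × ℝ => h p.1 p.2) (hθ : ∀ θ x, h (θ + 1) x = h θ x)
    (hx : ∀ θ x, h θ (x + 1) = h θ x) : ∃ C, ∀ θ x, |h θ x| ≤ C := by
  obtain ⟨C, hC⟩ := (isCompact_Icc.prod isCompact_Icc).exists_bound_of_continuousOn
    (s := Set.Icc (0 : ℝ) 1 ×ˢ Set.Icc (0 : ℝ) 1) hc.continuousOn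
  refine ⟨C, fun θ x => ?_⟩
  obtain ⟨θ', hθ', hθθ'⟩ := Periodic.exists_mem_Ico₀ (f := (h · x)) (fun t => hθ t x) one_pos θ
  obtain ⟨x', hx', hxx'⟩ := Periodic.exists_mem_Ico₀ (hx θ') one_pos x
  rw [hθθ', hxx']
  exact hC (θ', x') ⟨Set.Ico_subset_Icc_self hθ', Set.Ico_subset_Icc_self hx'⟩

lemma IsAngleLift.exists_abs_sub_mul_le {B : ℝ → Matrix (Fin 2) (Fin 2) ℝ} {g : ℝ → ℝ → ℝ}
    {r : ℝ} (hg : IsAngleLift B g) (hdeg : ∀ θ x, g (θ + 1) x = g θ x + r) :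
    ∃ C, ∀ θ x, |g θ x - r * θ| ≤ C :=
  exists_abs_le_of_continuous_of_periodic (hg.1.sub (continuous_const.mul continuous_fst))
    (fun θ x => by rw [hdeg]; ring) (fun θ x => by rw [hg.2.1])

lemma tendsto_div_natCast_of_abs_sub_mul_le {a : ℕ → ℝ} {c C : ℝ}
    (h : ∀ n : ℕ, |a n - n * c| ≤ C) : Tendsto (fun n : ℕ => a n / n) atTop (nhds c) := by
  have herr : Tendsto (fun n : ℕ => (a n - n * c) / n) atTop (nhds 0) :=
    squeeze_zero_norm (fun n => by
      rw [norm_div, Real.norm_natCast]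
      exact div_le_div_of_nonneg_right (h n) n.cast_nonneg)
      (tendsto_const_div_atTop_nhds_zero_nat C)
  have hlim := herr.add_const c
  rw [zero_add] at hlim
  refine hlim.congr' ((eventually_ne_atTop 0).mono fun n hn => ?_)
  field_simp
  ring

theorem stmt0_general (α : ℝ) (r : ℤ)
    (A B : ℝ → Matrix.SpecialLinearGroup (Fin 2) ℝ)
    (f : ℝ → ℝ → ℝ)
    (hf : IsAngleLift (fun θ => (A θ : Matrix (Fin 2) (Fin 2) ℝ)) f)
    (g : ℝ → ℝ → ℝ)
    (hg : IsAngleLift (fun θ => (B θ : Matrix (Fin 2) (Fin 2) ℝ)) g)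
    (hgdeg : ∀ θ x, g (θ + 1) x = g θ x + r)
    (f' : ℝ → ℝ → ℝ)
    (hf' : IsAngleLift
      (fun θ => ((B (θ + α) * A θ * (B θ)⁻¹ : Matrix.SpecialLinearGroup (Fin 2) ℝ) :
        Matrix (Fin 2) (Fin 2) ℝ)) f')
    (ρA ρC : ℝ)
    (hρA : HasFiberedRotNum α f ρA)
    (hρC : HasFiberedRotNum α f' ρC) :
    ∃ m : ℤ, ρC = ρA + (r : ℝ) * α + (m : ℝ) := by
  obtain ⟨m, hm⟩ := hf.exists_int_liftMap_fiberLift hg hf' fun θ => by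
    rw [← Matrix.SpecialLinearGroup.coe_mul, inv_mul_cancel_right,
      Matrix.SpecialLinearGroup.coe_mul]
  obtain ⟨C, hC⟩ := hg.exists_abs_sub_mul_le hgdeg
  set p : ℕ → ℝ × ℝ := fun n => (liftMap α f)^[n] 0
  have hdisp : ∀ n : ℕ, ((liftMap α f')^[n] (fiberLift g 0)).2 - (p n).2 =
      g (n * α) (p n).2 + n * m := by
    intro n
    rw [liftMap_iterate_fiberLift hf'.2.1 hm]
    simp only [fiberLift, p, liftMap_iterate_fst, Prod.fst_zero, zero_add, Prod.mk_add_mk,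
      add_zero]
    push_cast
    ring
  have hlim : Tendsto (fun n : ℕ => (((liftMap α f')^[n] (fiberLift g 0)).2 - (p n).2) / n)
      atTop (nhds (r * α + m)) :=
    tendsto_div_natCast_of_abs_sub_mul_le (C := C) fun n => by
      rw [hdisp]
      convert hC (n * α) (p n).2 using 2
      ring
  have hlim' : Tendsto (fun n : ℕ => (((liftMap α f')^[n] (fiberLift g 0)).2 - (p n).2) / n)
      atTop (nhds (ρC - ρA)) :=
    ((hρC.tendsto_iterate_snd_div _).sub (hρA.tendsto_iterate_snd_div 0)).congr
      fun n => (sub_div _ _ _).symm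
  exact ⟨m, by linarith [tendsto_nhds_unique hlim' hlim]⟩

/-- If A : 𝕋 → SL(2,ℝ) is continuous and homotopic to the identity (angle lift
1-periodic in θ) and B : 𝕋 → SL(2,ℝ) is continuous of degree r (angle lift g with
g(θ+1,x) = g(θ,x) + r), then the fibered rotation number of the conjugated cocycle
(α, B(·+α)A(·)B(·)⁻¹) equals that of (α,A) plus r·α, modulo 1. -/
theorem stmt0 (α : ℝ) (r : ℤ)
    (A B : ℝ → Matrix.SpecialLinearGroup (Fin 2) ℝ)
    (hAper : ∀ θ, A (θ + 1) = A θ) (hBper : ∀ θ, B (θ + 1) = B θ)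
    (f : ℝ → ℝ → ℝ)
    (hf : IsAngleLift (fun θ => (A θ : Matrix (Fin 2) (Fin 2) ℝ)) f)
    (hfdeg : ∀ θ x, f (θ + 1) x = f θ x)
    (g : ℝ → ℝ → ℝ)
    (hg : IsAngleLift (fun θ => (B θ : Matrix (Fin 2) (Fin 2) ℝ)) g)
    (hgdeg : ∀ θ x, g (θ + 1) x = g θ x + r)
    (f' : ℝ → ℝ → ℝ)
    (hf' : IsAngleLift
      (fun θ => ((B (θ + α) * A θ * (B θ)⁻¹ : Matrix.SpecialLinearGroup (Fin 2) ℝ) :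
        Matrix (Fin 2) (Fin 2) ℝ)) f')
    (hf'deg : ∀ θ x, f' (θ + 1) x = f' θ x)
    (ρA ρC : ℝ)
    (hρA : HasFiberedRotNum α f ρA)
    (hρC : HasFiberedRotNum α f' ρC) :
    ∃ m : ℤ, ρC = ρA + (r : ℝ) * α + (m : ℝ) :=
  stmt0_general α r A B f hf g hg hgdeg f' hf' ρA ρC hρA hρC

end
end

section
/- Let k ≥ l ≥ 0 with k - l even, and set M = (0 1; 1 -a_k)···(0 1; 1 -a_{l+1}) with entries m₁,m₂,m₃,m₄ (row-major). Then m₁ ≥ 0, m₄ ≥ 0, m₂ ≤ 0, m₃ ≤ 0, and the matrix (|m₄| |m₂|; |m₃| |m₁|) applied to the column vector (1, α_k) equals (β_{l-1}/β_{k-1})·(1, α_l). Furthermore if l = 0 then M = (p_{k-1} -q_{k-1}; -p_k q_k). -/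
/-!
Each factor `(0 1; 1 -a_{j+1})` sends `(1, α_j)` to `α_j • (1, α_{j+1})`, so
`M (1, α_l) = (β_{k-1}/β_{l-1}) (1, α_k)`. As `det M = (-1)^(k-l) = 1`, the adjugate
`(m₄ -m₂; -m₃ m₁)` inverts `M`, and it is the matrix of absolute values because
products of two factors, hence `M`, have the sign pattern `(+ -; - +)` (all `a_j ≥ 0`).
For `l = 0` the rows of `M` obey the recursion of the convergents.
-/

/-- Iterates of the Gauss map: α₀ = α, α_{k+1} = {1/α_k}. -/
noncomputable def ga (α : ℝ) : ℕ → ℝ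
  | 0 => α
  | k + 1 => Int.fract (ga α k)⁻¹

/-- Partial quotients: a_k = [1/α_{k-1}] for k ≥ 1. -/
noncomputable def aq (α : ℝ) : ℕ → ℤ
  | 0 => 0
  | k + 1 => ⌊(ga α k)⁻¹⌋

/-- bprod α k = β_{k-1} = α₀⋯α_{k-1} (so bprod α 0 = β_{-1} = 1). -/
noncomputable def bprod (α : ℝ) (k : ℕ) : ℝ := ∏ j ∈ Finset.range k, ga α j

/-- pqm α (k+1) = (p_k, q_k), with pqm α 0 = (p_{-1}, q_{-1}) = (1, 0). -/
noncomputable def pqm (α : ℝ) : ℕ → ℤ × ℤ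
  | 0 => (1, 0)
  | 1 => (0, 1)
  | k + 2 => (aq α (k + 1) * (pqm α (k + 1)).1 + (pqm α k).1,
              aq α (k + 1) * (pqm α (k + 1)).2 + (pqm α k).2)

/-- Mmat α l n = (0 1; 1 -a_{l+n})·…·(0 1; 1 -a_{l+1}). -/
noncomputable def Mmat (α : ℝ) (l : ℕ) : ℕ → Matrix (Fin 2) (Fin 2) ℤ
  | 0 => 1
  | n + 1 => !![0, 1; 1, -(aq α (l + n + 1))] * Mmat α l n

open scoped Matrix

lemma irrational_ga {α : ℝ} (hα : Irrational α) : ∀ j, Irrational (ga α j)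
  | 0 => hα
  | j + 1 => by
    simpa only [ga, Int.fract] using (irrational_ga hα j).inv.sub_intCast _

lemma ga_nonneg {α : ℝ} (h0 : 0 ≤ α) : ∀ j, 0 ≤ ga α j
  | 0 => h0
  | _ + 1 => Int.fract_nonneg _

lemma ga_pos {α : ℝ} (hα : Irrational α) (h0 : 0 < α) (j : ℕ) : 0 < ga α j :=
  (ga_nonneg h0.le j).lt_of_ne (irrational_ga hα j).ne_zero.symm

lemma aq_nonneg {α : ℝ} (h0 : 0 ≤ α) : ∀ j, 0 ≤ aq α j
  | 0 => le_rfl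
  | j + 1 => Int.floor_nonneg.2 (inv_nonneg.2 (ga_nonneg h0 j))

lemma aq_succ_add_ga_succ (α : ℝ) (j : ℕ) :
    (aq α (j + 1) : ℝ) + ga α (j + 1) = (ga α j)⁻¹ :=
  Int.floor_add_fract _

lemma Mmat_succ (α : ℝ) (l n : ℕ) :
    Mmat α l (n + 1) = !![0, 1; 1, -(aq α (l + n + 1))] * Mmat α l n := rfl

lemma det_Mmat (α : ℝ) (l n : ℕ) : (Mmat α l n).det = (-1) ^ n := by
  induction n with
  | zero => exact Matrix.det_one
  | succ n ih => rw [Mmat_succ, Matrix.det_mul, ih, Matrix.det_fin_two_of, pow_succ']; ring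

def HasCheckerboardSigns {R : Type*} [Ring R] [PartialOrder R]
    (M : Matrix (Fin 2) (Fin 2) R) : Prop :=
  0 ≤ M 0 0 ∧ 0 ≤ M 1 1 ∧ M 0 1 ≤ 0 ∧ M 1 0 ≤ 0

lemma HasCheckerboardSigns.mul {R : Type*} [Ring R] [PartialOrder R] [IsOrderedRing R]
    {M N : Matrix (Fin 2) (Fin 2) R} (hM : HasCheckerboardSigns M)
    (hN : HasCheckerboardSigns N) : HasCheckerboardSigns (M * N) := by
  obtain ⟨hM₀₀, hM₁₁, hM₀₁, hM₁₀⟩ := hM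
  obtain ⟨hN₀₀, hN₁₁, hN₀₁, hN₁₀⟩ := hN
  simp only [HasCheckerboardSigns, Matrix.mul_apply, Fin.sum_univ_two]
  refine ⟨?_, ?_, ?_, ?_⟩
  · exact add_nonneg (mul_nonneg hM₀₀ hN₀₀) (mul_nonneg_of_nonpos_of_nonpos hM₀₁ hN₁₀)
  · exact add_nonneg (mul_nonneg_of_nonpos_of_nonpos hM₁₀ hN₀₁) (mul_nonneg hM₁₁ hN₁₁)
  · exact add_nonpos (mul_nonpos_of_nonneg_of_nonpos hM₀₀ hN₀₁)
      (mul_nonpos_of_nonpos_of_nonneg hM₀₁ hN₁₁)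
  · exact add_nonpos (mul_nonpos_of_nonpos_of_nonneg hM₁₀ hN₀₀)
      (mul_nonpos_of_nonneg_of_nonpos hM₁₁ hN₁₀)

lemma Mmat_add_two (α : ℝ) (l n : ℕ) :
    Mmat α l (n + 2) = !![1, -aq α (l + n + 1); -aq α (l + n + 2),
      1 + aq α (l + n + 2) * aq α (l + n + 1)] * Mmat α l n := by
  rw [Mmat_succ, Mmat_succ, ← mul_assoc, Matrix.mul_fin_two]
  simp only [add_assoc]
  norm_num

lemma hasCheckerboardSigns_Mmat {α : ℝ} (h0 : 0 ≤ α) (l : ℕ) {n : ℕ} (hn : Even n) :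
    HasCheckerboardSigns (Mmat α l n) := by
  induction n using Nat.twoStepInduction with
  | zero => simp [HasCheckerboardSigns, Mmat]
  | one => exact absurd hn Nat.not_even_one
  | more n ih _ =>
    rw [Mmat_add_two]
    have ha := aq_nonneg h0
    refine HasCheckerboardSigns.mul ⟨zero_le_one, ?_, ?_, ?_⟩
      (ih (Nat.even_add.1 hn |>.2 even_two))
    · simpa using add_nonneg zero_le_one (mul_nonneg (ha (l + n + 2)) (ha (l + n + 1)))
    · simpa using ha _
    · simpa using ha _

lemma gaussStep_mulVec {α : ℝ} (j : ℕ) (hj : ga α j ≠ 0) :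
    (!![0, 1; 1, -aq α (j + 1)]).map (Int.cast : ℤ → ℝ) *ᵥ ![1, ga α j] =
      ga α j • ![1, ga α (j + 1)] := by
  have hstep : 1 - aq α (j + 1) * ga α j = ga α j * ga α (j + 1) := by
    rw [← mul_inv_cancel₀ hj, ← aq_succ_add_ga_succ]; ring
  ext i
  fin_cases i
  · simp
  · simpa [mul_comm, sub_eq_add_neg] using hstep

lemma Mmat_mulVec {α : ℝ} (hα : Irrational α) (l n : ℕ) :
    bprod α l • ((Mmat α l n).map (Int.cast : ℤ → ℝ) *ᵥ ![1, ga α l]) =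
      bprod α (l + n) • ![1, ga α (l + n)] := by
  induction n with
  | zero => simp [Mmat]
  | succ n ih =>
    rw [Mmat_succ, Matrix.map_mul_intCast, ← Matrix.mulVec_mulVec, ← Matrix.mulVec_smul, ih,
      Matrix.mulVec_smul, gaussStep_mulVec _ (irrational_ga hα (l + n)).ne_zero, smul_smul,
      ← add_assoc, bprod, bprod, Finset.prod_range_succ]

lemma Mmat_zero_eq (α : ℝ) (n : ℕ) :
    Mmat α 0 n = (-1) ^ n •
      !![(pqm α n).1, -(pqm α n).2; -(pqm α (n + 1)).1, (pqm α (n + 1)).2] := by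
  induction n with
  | zero => simp [Mmat, pqm, Matrix.one_fin_two]
  | succ n ih =>
    rw [Mmat_succ, ih, Matrix.mul_smul, pow_succ, mul_comm, mul_smul, neg_one_smul]
    ext i j
    fin_cases i <;> fin_cases j <;> simp [pqm] <;> ring

lemma adjugate_Mmat_mulVec {α : ℝ} (hα : Irrational α) (l n : ℕ) :
    bprod α (l + n) •
        (((Mmat α l n).map (Int.cast : ℤ → ℝ)).adjugate *ᵥ ![1, ga α (l + n)]) =
      ((-1) ^ n * bprod α l) • ![1, ga α l] := by
  set M := (Mmat α l n).map (Int.cast : ℤ → ℝ)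
  have hdet : M.det = (-1) ^ n := by rw [← Int.cast_det, det_Mmat]; push_cast; rfl
  rw [← Matrix.mulVec_smul, ← Mmat_mulVec hα, Matrix.mulVec_smul, Matrix.mulVec_mulVec,
    Matrix.adjugate_mul, hdet, Matrix.smul_mulVec, Matrix.one_mulVec, smul_smul, mul_comm]

theorem stmt4_general (α : ℝ) (hα : Irrational α) (h0 : 0 < α)
    (k l : ℕ) (hkl : l ≤ k) (heven : 2 ∣ (k - l)) :
    (0 ≤ Mmat α l (k - l) 0 0 ∧ 0 ≤ Mmat α l (k - l) 1 1 ∧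
      Mmat α l (k - l) 0 1 ≤ 0 ∧ Mmat α l (k - l) 1 0 ≤ 0) ∧
    ((|Mmat α l (k - l) 1 1| : ℝ) + (|Mmat α l (k - l) 0 1| : ℝ) * ga α k =
        bprod α l / bprod α k * 1) ∧
    ((|Mmat α l (k - l) 1 0| : ℝ) + (|Mmat α l (k - l) 0 0| : ℝ) * ga α k =
        bprod α l / bprod α k * ga α l) ∧
    (l = 0 → Mmat α l (k - l) =
        !![(pqm α k).1, -(pqm α k).2; -(pqm α (k + 1)).1, (pqm α (k + 1)).2]) := by
  obtain ⟨n, rfl⟩ := Nat.exists_eq_add_of_le hkl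
  rw [Nat.add_sub_cancel_left] at heven ⊢
  have hn : Even n := even_iff_two_dvd.2 heven
  have hsigns := hasCheckerboardSigns_Mmat h0.le l hn
  have hb : bprod α (l + n) ≠ 0 := (Finset.prod_pos fun j _ => ga_pos hα h0 j).ne'
  have hadj := adjugate_Mmat_mulVec hα l n
  rw [hn.neg_one_pow, one_mul, Matrix.adjugate_fin_two] at hadj
  have h₀ := congrFun hadj 0
  have h₁ := congrFun hadj 1
  simp only [Matrix.mulVec_fin_two, Matrix.map_apply, Pi.smul_apply, smul_eq_mul,
    Matrix.of_apply, Matrix.cons_val_zero, Matrix.cons_val_one] at h₀ h₁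
  refine ⟨hsigns, ?_, ?_, fun hl => ?_⟩
  · rw [abs_of_nonneg (Int.cast_nonneg hsigns.2.1), abs_of_nonpos (Int.cast_nonpos.2 hsigns.2.2.1),
      div_mul_eq_mul_div, eq_div_iff hb]
    linear_combination h₀
  · rw [abs_of_nonpos (Int.cast_nonpos.2 hsigns.2.2.2), abs_of_nonneg (Int.cast_nonneg hsigns.1),
      div_mul_eq_mul_div, eq_div_iff hb]
    linear_combination h₁
  · subst hl
    rw [zero_add, Mmat_zero_eq, hn.neg_one_pow, one_smul]

/-- For k ≥ l with k - l even, the matrix M = (0 1;1 -a_k)⋯(0 1;1 -a_{l+1}) =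
(m₁ m₂; m₃ m₄) has m₁,m₄ ≥ 0, m₂,m₃ ≤ 0, and
(|m₄| |m₂|; |m₃| |m₁|)·(1, α_k)ᵀ = (β_{l-1}/β_{k-1})·(1, α_l)ᵀ;
moreover if l = 0 then M = (p_{k-1} -q_{k-1}; -p_k q_k). -/
theorem stmt4 (α : ℝ) (hα : Irrational α) (h0 : 0 < α) (h1 : α < 1)
    (k l : ℕ) (hkl : l ≤ k) (heven : 2 ∣ (k - l)) :
    (0 ≤ Mmat α l (k - l) 0 0 ∧ 0 ≤ Mmat α l (k - l) 1 1 ∧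
      Mmat α l (k - l) 0 1 ≤ 0 ∧ Mmat α l (k - l) 1 0 ≤ 0) ∧
    ((|Mmat α l (k - l) 1 1| : ℝ) + (|Mmat α l (k - l) 0 1| : ℝ) * ga α k =
        bprod α l / bprod α k * 1) ∧
    ((|Mmat α l (k - l) 1 0| : ℝ) + (|Mmat α l (k - l) 0 0| : ℝ) * ga α k =
        bprod α l / bprod α k * ga α l) ∧
    (l = 0 → Mmat α l (k - l) =
        !![(pqm α k).1, -(pqm α k).2; -(pqm α (k + 1)).1, (pqm α (k + 1)).2]) :=
  stmt4_general α hα h0 k l hkl heven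
end
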